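/- arXiv:1504.03665 — 11 statements merged into one kernel-verified Lean document; each statement's English description precedes it below -/
import Mathlib

section
/- If p is a monic polynomial of degree d with real coefficients all of whose roots are real, then for every real number s the polynomial p + s·p' also has only real roots. -/
/-!
If all roots `r` of `p` are real and `z` is not real, then each term of
`p'(z) / p(z) = ∑ 1 / (z - r)` has imaginary part of sign opposite to `Im z`, so this
logarithmic derivative is not real as soon as `p` has a root. But `p(z) + s p'(z) = 0`
with `p(z) ≠ 0` gives `p'(z) / p(z) = -1 / s`, a real number.
-/

open Polynomial

/-- A real polynomial is hyperbolic if all its complex roots are real. -/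
def Hyperbolic (p : Polynomial ℝ) : Prop :=
  ∀ z : ℂ, Polynomial.aeval z p = 0 → z.im = 0

theorem Complex.im_mul_im_one_div_sub_neg {z r : ℂ} (hr : r.im = 0) (hz : z.im ≠ 0) :
    z.im * (1 / (z - r)).im < 0 := by
  have hzr : 0 < Complex.normSq (z - r) :=
    Complex.normSq_pos.2 (sub_ne_zero.2 fun h ↦ hz (h ▸ hr))
  rw [one_div, Complex.inv_im, Complex.sub_im, hr, sub_zero, mul_div_assoc', mul_neg]
  exact div_neg_of_neg_of_pos (neg_neg_of_pos (mul_self_pos.2 hz)) hzr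

theorem Complex.im_mul_im_sum_one_div_sub_neg {s : Multiset ℂ} (hs : ∀ r ∈ s, r.im = 0)
    (hs0 : s ≠ 0) {z : ℂ} (hz : z.im ≠ 0) :
    z.im * (s.map fun r ↦ 1 / (z - r)).sum.im < 0 := by
  rw [← Complex.coe_imAddGroupHom, map_multiset_sum, Multiset.map_map,
    ← Multiset.sum_map_mul_left]
  simpa using Multiset.sum_lt_sum_of_nonempty (g := fun _ ↦ (0 : ℝ)) hs0
    fun r hr ↦ Complex.im_mul_im_one_div_sub_neg (hs r hr) hz

theorem Hyperbolic.im_eq_zero_of_mem_aroots {p : ℝ[X]} (hp : Hyperbolic p) {r : ℂ}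
    (hr : r ∈ p.aroots ℂ) : r.im = 0 :=
  hp r (mem_aroots.1 hr).2

theorem Hyperbolic.im_mul_im_aeval_derivative_div_aeval_neg {p : ℝ[X]} (hp : Hyperbolic p)
    (hdeg : 0 < p.natDegree) {z : ℂ} (hz : z.im ≠ 0) :
    z.im * (aeval z (derivative p) / aeval z p).im < 0 := by
  have hpz : aeval z p ≠ 0 := fun h ↦ hz (hp z h)
  rw [← eval_map_algebraMap] at hpz
  rw [← eval_map_algebraMap, ← eval_map_algebraMap, ← derivative_map]
  rw [(IsAlgClosed.splits _).eval_derivative_div_eval_of_ne_zero hpz]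
  refine Complex.im_mul_im_sum_one_div_sub_neg (fun r ↦ hp.im_eq_zero_of_mem_aroots) ?_ hz
  rw [← Multiset.card_pos, IsAlgClosed.card_aroots_eq_natDegree]
  exact hdeg

theorem nuij_theorem_general (p : Polynomial ℝ) (hp : Hyperbolic p) (s : ℝ) :
    Hyperbolic (p + s • Polynomial.derivative p) := by
  intro z hz
  by_contra hzim
  have hpz : aeval z p ≠ 0 := fun h ↦ hzim (hp z h)
  rw [map_add, map_smul, Complex.real_smul] at hz
  have hw : 1 + s * (aeval z (derivative p) / aeval z p) = 0 := by
    field_simp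
    linear_combination hz
  rcases Nat.eq_zero_or_pos p.natDegree with hdeg | hdeg
  · simp [derivative_of_natDegree_zero hdeg] at hw
  · have hs : s ≠ 0 := by
      rintro rfl
      simp at hw
    have hwim : (aeval z (derivative p) / aeval z p).im = 0 := by
      simpa [hs] using congrArg Complex.im hw
    have hneg := hp.im_mul_im_aeval_derivative_div_aeval_neg hdeg hzim
    rw [hwim, mul_zero] at hneg
    exact hneg.false

/-- Nuij's theorem: if `p` is monic of degree `d` and hyperbolic, then
`p + s • p'` is hyperbolic for every real `s`. -/
theorem nuij_theorem (d : ℕ) (p : Polynomial ℝ) (hm : p.Monic)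
    (hdeg : p.natDegree = d) (hp : Hyperbolic p) (s : ℝ) :
    Hyperbolic (p + s • Polynomial.derivative p) :=
  nuij_theorem_general p hp s
end

section
/- For d = 2, the set of sequences (a₁, a₂) ∈ ℝ² such that p + a₁·s·p' + a₂·s²·p'' is hyperbolic for every hyperbolic monic quadratic p and every real s equals the set {(a₁, a₂) : a₁² - 2a₂ ≥ 0}. -/
open Polynomial

/-!
A monic quadratic `X² + bX + c` is hyperbolic exactly when its discriminant `b² - 4c` is
nonnegative. The perturbation `p + a₁ s p' + a₂ s² p''` of such a quadratic is again a monic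
quadratic, and its discriminant is `(b² - 4c) + 4s²(a₁² - 2a₂)`. This is nonnegative for all
hyperbolic `p` and all `s` iff `a₁² - 2a₂ ≥ 0`; for necessity take `p = X²`, `s = 1`.
-/

-- The right-hand side has the shape expected by `quadratic_eq_zero_iff`.
open Complex in
lemma aeval_X_sq_add_C_mul_X_add_C (b c : ℝ) (z : ℂ) :
    aeval z (X ^ 2 + C b * X + C c) = 1 * (z * z) + b * z + c := by
  simp only [map_add, aeval_X, map_mul, aeval_C, coe_algebraMap, one_mul, sq]

open Complex in
lemma hyperbolic_X_sq_add_C_mul_X_add_C_iff (b c : ℝ) :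
    Hyperbolic (X ^ 2 + C b * X + C c) ↔ 0 ≤ discrim 1 b c := by
  have hdisc : discrim (1 : ℂ) b c = (discrim 1 b c : ℝ) := by
    simp only [discrim]
    push_cast
    ring
  constructor
  · intro h
    by_contra! hneg
    set r := √(-discrim 1 b c)
    have hs : discrim (1 : ℂ) b c = (r * I) * (r * I) := by
      rw [hdisc, mul_mul_mul_comm, ← ofReal_mul, Real.mul_self_sqrt (by linarith), I_mul_I]
      push_cast
      ring
    have hroot := (quadratic_eq_zero_iff one_ne_zero hs _).2 (Or.inl rfl)
    have him : ((-b + r * I) / (2 * 1) : ℂ).im = r / 2 := by simp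
    have hr : 0 < r := Real.sqrt_pos.2 (by linarith)
    linarith [him ▸ h _ ((aeval_X_sq_add_C_mul_X_add_C b c _).trans hroot)]
  · intro h z hz
    have hs : discrim (1 : ℂ) b c = (√(discrim 1 b c) : ℂ) * √(discrim 1 b c) := by
      rw [hdisc, ← ofReal_mul, Real.mul_self_sqrt h]
    rw [aeval_X_sq_add_C_mul_X_add_C, quadratic_eq_zero_iff one_ne_zero hs] at hz
    rcases hz with rfl | rfl <;> simp

lemma X_sq_add_C_mul_X_add_C_add_smul_derivative_add_smul_derivative (b c t u : ℝ) :
    (X ^ 2 + C b * X + C c) + t • derivative (X ^ 2 + C b * X + C c)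
        + u • derivative (derivative (X ^ 2 + C b * X + C c))
      = X ^ 2 + C (b + 2 * t) * X + C (c + t * b + 2 * u) := by
  simp only [derivative_X_pow_succ, Nat.cast_one, map_add, map_one, pow_one,
    derivative_mul, derivative_C, zero_mul, derivative_X, mul_one, zero_add, add_zero, smul_add,
    smul_eq_C_mul, derivative_one, map_mul, map_ofNat]
  ring

lemma hyperbolic_nuij_perturbation_iff (a₁ a₂ b c s : ℝ) :
    Hyperbolic ((X ^ 2 + C b * X + C c) + (a₁ * s) • derivative (X ^ 2 + C b * X + C c)
        + (a₂ * s ^ 2) • derivative (derivative (X ^ 2 + C b * X + C c)))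
      ↔ 0 ≤ discrim 1 b c + 4 * s ^ 2 * (a₁ ^ 2 - 2 * a₂) := by
  rw [X_sq_add_C_mul_X_add_C_add_smul_derivative_add_smul_derivative,
    hyperbolic_X_sq_add_C_mul_X_add_C_iff]
  unfold discrim
  ring_nf

/-- For `d = 2`, the set of `(a₁, a₂) ∈ ℝ²` such that
`p + a₁ s p' + a₂ s² p''` is hyperbolic for every hyperbolic monic
quadratic `p` and every real `s` equals `{(a₁, a₂) : a₁² - 2 a₂ ≥ 0}`. -/
theorem nuij_seq_dim_two :
    {a : ℝ × ℝ | ∀ p : Polynomial ℝ, p.Monic → p.natDegree = 2 → Hyperbolic p →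
      ∀ s : ℝ, Hyperbolic (p + (a.1 * s) • Polynomial.derivative p
        + (a.2 * s ^ 2) • Polynomial.derivative (Polynomial.derivative p))}
    = {a : ℝ × ℝ | a.1 ^ 2 - 2 * a.2 ≥ 0} := by
  ext a
  simp only [Set.mem_ofPred_eq]
  constructor
  · intro h
    have hX : IsMonicOfDegree (X ^ 2 + C 0 * X + C 0 : ℝ[X]) 2 := isMonicOfDegree_add_add_two 0 0
    have hX_hyp : Hyperbolic (X ^ 2 + C 0 * X + C 0) :=
      (hyperbolic_X_sq_add_C_mul_X_add_C_iff 0 0).2 (by norm_num [discrim])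
    have hdisc := h _ hX.monic hX.natDegree_eq hX_hyp 1
    rw [hyperbolic_nuij_perturbation_iff] at hdisc
    simp only [discrim] at hdisc
    linarith
  · intro h p hm hd hp s
    obtain ⟨b, c, rfl⟩ := isMonicOfDegree_two_iff.mp ⟨hd, hm⟩
    rw [hyperbolic_X_sq_add_C_mul_X_add_C_iff] at hp
    rw [hyperbolic_nuij_perturbation_iff]
    exact add_nonneg hp (mul_nonneg (by positivity) h)
end

section
/- A sequence (a₁, …, a_d) ∈ ℝ^d is a Nuij sequence if and only if the polynomial q_a(z) = z^d + Σ_{k=1}^d a_k · (d!/(d-k)!) · z^{d-k} is hyperbolic. -/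
open Polynomial

/-- The perturbed polynomial `p_a(·, s) = p + ∑_{k=1}^d a_k s^k p^{(k)}`. -/
noncomputable def NuijPencil (d : ℕ) (a : ℕ → ℝ) (p : Polynomial ℝ) (s : ℝ) : Polynomial ℝ :=
  p + ∑ k ∈ Finset.Icc 1 d, (a k * s ^ k) • (Polynomial.derivative^[k] p)

/-- `(a₁, …, a_d)` is a Nuij sequence: the pencil is hyperbolic for every
hyperbolic `p` of degree `d` and every real `s`. -/
def IsNuijSeq (d : ℕ) (a : ℕ → ℝ) : Prop :=
  ∀ p : Polynomial ℝ, p.natDegree = d → Hyperbolic p →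
    ∀ s : ℝ, Hyperbolic (NuijPencil d a p s)

/-!
If `a` is a Nuij sequence, taking `p = zᵈ` and `s = 1` shows that `q_a` is hyperbolic.

Conversely, `(zᵈ)_a(·, s)` has the roots of `q_a` scaled by `s`, so it is hyperbolic, and
`d! p_a(w, s) = Σₖ k! (d-k)! cₖ(p(· + w)) c_{d-k}((zᵈ)_a(·, s))` is a (sign-free) apolarity
pairing. If `Im w > 0`, then `p(· + w)` has all its zeros in the open lower half plane, and by
Grace's theorem the pairing of such a polynomial with a real-rooted one of the same degree does
not vanish. Grace's theorem is proved by induction on the degree: dividing the real-rooted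
polynomial by `z - c` replaces the other one by its polar derivative at the real point `-c`,
which by Laguerre's theorem keeps all its zeros in the open lower half plane.
-/

open Finset
open scoped Nat

lemma Multiset.im_sum_map_neg {α : Type*} {s : Multiset α} (hs : s ≠ 0) {u : α → ℂ}
    (h : ∀ x ∈ s, (u x).im < 0) : (s.map u).sum.im < 0 := by
  have : (s.map fun x => (u x).im).sum < (s.map fun _ => (0 : ℝ)).sum :=
    Multiset.sum_lt_sum_of_nonempty hs h
  have him : (s.map u).sum.im = (s.map fun x => (u x).im).sum := by
    simpa [Multiset.map_map] using map_multiset_sum Complex.imAddGroupHom (s.map u)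
  simpa [him] using this

lemma Complex.im_mul_div_sub_neg {ζ z w : ℂ} (hζ : ζ.im = 0) (hz : z.im < 0) (hw : 0 ≤ w.im)
    (hwζ : w ≠ ζ) : ((z - ζ) * (w - ζ) / (w - z)).im < 0 := by
  have hzζ : (z - ζ).im < 0 := by simpa [hζ] using hz
  have hwζ' : 0 ≤ (w - ζ).im := by simpa [hζ] using hw
  have hzζ0 : z - ζ ≠ 0 := fun h => by simp [h] at hzζ
  have hwz : w - z ≠ 0 := fun h => by
    have := congrArg Complex.im h
    simp only [Complex.sub_im, Complex.zero_im] at this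
    linarith
  -- `(z - ζ)⁻¹` lies in the open upper half plane and `(w - ζ)⁻¹` in the closed lower one
  have key : (z - ζ) * (w - ζ) / (w - z) = ((z - ζ)⁻¹ - (w - ζ)⁻¹)⁻¹ := by
    rw [inv_sub_inv hzζ0 (sub_ne_zero.2 hwζ), inv_div]
    congr 1
    ring
  have him : 0 < ((z - ζ)⁻¹ - (w - ζ)⁻¹).im := by
    rw [Complex.sub_im, Complex.inv_im, Complex.inv_im]
    have h1 : 0 < -(z - ζ).im / Complex.normSq (z - ζ) :=
      div_pos (neg_pos.2 hzζ) (Complex.normSq_pos.2 hzζ0)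
    have h2 : 0 ≤ (w - ζ).im / Complex.normSq (w - ζ) :=
      div_nonneg hwζ' (Complex.normSq_nonneg _)
    linarith [neg_div (Complex.normSq (w - ζ)) (w - ζ).im]
  rw [key, Complex.inv_im]
  exact div_neg_of_neg_of_pos (neg_lt_zero.2 him)
    (Complex.normSq_pos.2 fun h => by simp [h] at him)

namespace Polynomial

section polarDeriv

variable {R : Type*} [CommRing R]

noncomputable def polarDeriv (n : ℕ) (ζ : R) (f : R[X]) : R[X] :=
  C (n : R) * f - (X - C ζ) * derivative f

lemma coeff_polarDeriv (n : ℕ) (ζ : R) (f : R[X]) (k : ℕ) :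
    (polarDeriv n ζ f).coeff k = (n - k) * f.coeff k + ζ * (k + 1) * f.coeff (k + 1) := by
  have hX : (X * derivative f).coeff k = k * f.coeff k := by
    cases k with
    | zero => simp
    | succ j => rw [coeff_X_mul, coeff_derivative]; push_cast; ring
  rw [polarDeriv, coeff_sub, coeff_C_mul, sub_mul, coeff_sub, hX, coeff_C_mul, coeff_derivative]
  ring

lemma eval_polarDeriv (n : ℕ) (ζ : R) (f : R[X]) (w : R) :
    (polarDeriv n ζ f).eval w = n * f.eval w - (w - ζ) * (derivative f).eval w := by
  simp [polarDeriv]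

end polarDeriv

variable {f : ℂ[X]} {n : ℕ} {ζ : ℂ}

lemma ne_zero_of_forall_isRoot_im_nonpos (hf : ∀ z, f.IsRoot z → z.im ≤ 0) : f ≠ 0 := by
  rintro rfl
  exact absurd (hf Complex.I (by simp)) (by simp)

lemma natDegree_polarDeriv (hdeg : f.natDegree = n + 1) (hf : ∀ z, f.IsRoot z → z.im < 0)
    (hζ : ζ.im = 0) : (polarDeriv (n + 1) ζ f).natDegree = n := by
  have hf0 := ne_zero_of_forall_isRoot_im_nonpos fun z hz => (hf z hz).le
  have hroots : f.roots ≠ 0 := (IsAlgClosed.splits f).roots_ne_zero (by omega)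
  -- Vieta; the imaginary part of the second factor is `-∑ Im z > 0`
  have htop : (polarDeriv (n + 1) ζ f).coeff n =
      f.leadingCoeff * ((n + 1) * ζ - f.roots.sum) := by
    have hnext := (IsAlgClosed.splits f).nextCoeff_eq_neg_sum_roots_mul_leadingCoeff
    rw [nextCoeff_of_natDegree_pos (by omega), hdeg, Nat.add_sub_cancel] at hnext
    have hlc : f.coeff (n + 1) = f.leadingCoeff := by rw [← hdeg]; rfl
    rw [coeff_polarDeriv, hnext, hlc]
    push_cast
    ring
  refine natDegree_eq_of_le_of_coeff_ne_zero ?_ ?_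
  · rw [natDegree_le_iff_coeff_eq_zero]
    intro k hk
    rw [coeff_polarDeriv, coeff_eq_zero_of_natDegree_lt (p := f) (n := k + 1) (by omega)]
    rcases eq_or_ne k (n + 1) with rfl | hk'
    · simp
    · rw [coeff_eq_zero_of_natDegree_lt (by omega)]
      ring
  · rw [htop]
    refine mul_ne_zero (leadingCoeff_ne_zero.2 hf0) fun h => ?_
    have hsum : f.roots.sum.im < 0 := by
      simpa using Multiset.im_sum_map_neg (u := id) hroots
        fun z hz => hf z ((mem_roots hf0).1 hz)
    rw [sub_eq_zero] at h
    exact hsum.ne (by simp [← h, hζ])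

theorem im_neg_of_isRoot_polarDeriv (hdeg : f.natDegree = n + 1)
    (hf : ∀ z, f.IsRoot z → z.im < 0) (hζ : ζ.im = 0) {w : ℂ}
    (hw : (polarDeriv (n + 1) ζ f).IsRoot w) : w.im < 0 := by
  by_contra! hw0
  have hf0 := ne_zero_of_forall_isRoot_im_nonpos fun z hz => (hf z hz).le
  have hfw : f.eval w ≠ 0 := fun h => (hf w h).not_ge hw0
  rw [IsRoot, eval_polarDeriv] at hw
  have hwζ : w ≠ ζ := by
    rintro rfl
    rw [sub_self, zero_mul, sub_zero] at hw
    exact mul_ne_zero (Nat.cast_ne_zero.2 n.succ_ne_zero) hfw hw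
  have hlog := (IsAlgClosed.splits f).eval_derivative_div_eval_of_ne_zero hfw
  have hcard : (f.roots.card : ℂ) = n + 1 := by
    rw [← (IsAlgClosed.splits f).natDegree_eq_card_roots, hdeg]
    push_cast; ring
  -- `∑ (z - ζ)(w - ζ)/(w - z) = (w - ζ) ((w - ζ) f'(w)/f(w) - (n + 1)) = 0`
  have hsum : (f.roots.map fun z => (z - ζ) * (w - ζ) / (w - z)).sum = 0 := by
    have hterm : ∀ z ∈ f.roots, (z - ζ) * (w - ζ) / (w - z) =
        (w - ζ) * ((w - ζ) * (1 / (w - z)) - 1) := by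
      intro z hz
      have : w - z ≠ 0 := sub_ne_zero.2 fun h => hfw (h ▸ (mem_roots hf0).1 hz)
      field_simp
      ring
    rw [Multiset.map_congr rfl hterm, Multiset.sum_map_mul_left, Multiset.sum_map_sub,
      Multiset.sum_map_mul_left, ← hlog, Multiset.map_const', Multiset.sum_replicate,
      nsmul_eq_mul, mul_one, hcard, mul_div_assoc', ← sub_eq_zero.1 hw,
      mul_div_cancel_right₀ _ hfw]
    push_cast
    ring
  have hroots : f.roots ≠ 0 := (IsAlgClosed.splits f).roots_ne_zero (by omega)
  have := Multiset.im_sum_map_neg hroots fun z hz =>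
    Complex.im_mul_div_sub_neg (w := w) hζ (hf z ((mem_roots hf0).1 hz)) hw0 hwζ
  rw [hsum, Complex.zero_im] at this
  exact lt_irrefl 0 this

section apolar

variable {R : Type*} [CommRing R]

-- Unlike the classical apolarity form this one carries no signs `(-1)ᵏ`, so a root `c` of `g`
-- is matched by the polar derivative of `f` at `-c` (see `apolar_X_sub_C_mul`).
noncomputable def apolar (d : ℕ) (f : R[X]) : R[X] →ₗ[R] R :=
  ∑ k ∈ range (d + 1), (k ! * (d - k)! * f.coeff k : R) • lcoeff R (d - k)

lemma apolar_zero_apply (f g : R[X]) : apolar 0 f g = f.coeff 0 * g.coeff 0 := by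
  simp [apolar]

lemma apolar_X_pow (f : R[X]) (i j : ℕ) : apolar (i + j) f (X ^ j) = i ! * j ! * f.coeff i := by
  simp only [apolar, LinearMap.sum_apply, LinearMap.smul_apply, lcoeff_apply, coeff_X_pow,
    smul_eq_mul, mul_ite, mul_one, mul_zero]
  rw [Finset.sum_eq_single i]
  · simp
  · intro k hk hki
    rw [if_neg (by rw [mem_range] at hk; omega)]
  · simp

lemma apolar_X_sub_C_mul (f g : R[X]) (c : R) {d : ℕ} (hg : g.natDegree ≤ d) :
    apolar (d + 1) f ((X - C c) * g) = apolar d (polarDeriv (d + 1) (-c) f) g := by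
  rw [as_sum_range' g (d + 1) (by omega), mul_sum, map_sum, map_sum]
  refine Finset.sum_congr rfl fun i hi => ?_
  obtain ⟨k, rfl⟩ : ∃ k, d = k + i := ⟨d - i, by rw [mem_range] at hi; omega⟩
  have hmul : (X - C c) * monomial i (g.coeff i) = g.coeff i • (X ^ (i + 1) - c • X ^ i) := by
    rw [← smul_X_eq_monomial, smul_eq_C_mul, smul_eq_C_mul, smul_eq_C_mul]
    ring
  rw [hmul, ← smul_X_eq_monomial, map_smul, map_smul, map_sub, map_smul,
    show k + i + 1 = k + (i + 1) by ring, apolar_X_pow, show k + (i + 1) = (k + 1) + i by ring,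
    apolar_X_pow, apolar_X_pow, coeff_polarDeriv]
  simp only [Nat.factorial_succ, smul_eq_mul]
  push_cast
  ring

lemma apolar_taylor_iterate_derivative_X_pow (f : R[X]) (w : R) {d k : ℕ} (hk : k ≤ d) :
    apolar d (taylor w f) (derivative^[k] (X ^ d)) = d ! * (derivative^[k] f).eval w := by
  obtain ⟨j, rfl⟩ := Nat.exists_eq_add_of_le hk
  rw [iterate_derivative_X_pow_eq_C_mul, Nat.add_sub_cancel_left, ← smul_eq_C_mul, map_smul,
    apolar_X_pow, taylor_coeff, ← factorial_smul_hasseDeriv, LinearMap.smul_apply, eval_smul,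
    nsmul_eq_mul, smul_eq_mul]
  have h := Nat.factorial_mul_descFactorial (n := k + j) (k := k) (by omega)
  rw [Nat.add_sub_cancel_left] at h
  rw [← h]
  push_cast
  ring

end apolar

theorem apolar_ne_zero {d : ℕ} {f g : ℂ[X]} (hfd : f.natDegree = d) (hgd : g.natDegree = d)
    (hf : ∀ z, f.IsRoot z → z.im < 0) (hg : ∀ z, g.IsRoot z → z.im = 0) :
    apolar d f g ≠ 0 := by
  induction d generalizing f g with
  | zero =>
    have hf0 := leadingCoeff_ne_zero.2 <|
      ne_zero_of_forall_isRoot_im_nonpos fun z hz => (hf z hz).le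
    have hg0 := leadingCoeff_ne_zero.2 <|
      ne_zero_of_forall_isRoot_im_nonpos fun z hz => (hg z hz).le
    rw [leadingCoeff, hfd] at hf0
    rw [leadingCoeff, hgd] at hg0
    rw [apolar_zero_apply]
    exact mul_ne_zero hf0 hg0
  | succ d ih =>
    obtain ⟨c, hc⟩ := Complex.exists_root (f := g) (natDegree_pos_iff_degree_pos.1 (by omega))
    set g₁ := g /ₘ (X - C c)
    have hg₁ : (X - C c) * g₁ = g := mul_divByMonic_eq_iff_isRoot.2 hc
    have hg₁d : g₁.natDegree = d := by
      rw [natDegree_divByMonic _ (monic_X_sub_C c), hgd, natDegree_X_sub_C, Nat.add_sub_cancel]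
    have hc' : (-c).im = 0 := by rw [Complex.neg_im, hg c hc, neg_zero]
    rw [← hg₁, apolar_X_sub_C_mul _ _ _ hg₁d.le]
    refine ih (natDegree_polarDeriv hfd hf hc') hg₁d
      (fun z hz => im_neg_of_isRoot_polarDeriv hfd hf hc' hz)
      (fun z hz => hg z ?_)
    rw [← hg₁]
    exact root_mul_left_of_isRoot _ hz

end Polynomial

open Polynomial

lemma hyperbolic_X_pow (d : ℕ) : Hyperbolic (X ^ d) := by
  intro z hz
  rw [map_pow, aeval_X, pow_eq_zero_iff'] at hz
  simp [hz.1]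

lemma Hyperbolic.im_eq_zero_of_isRoot_map {p : ℝ[X]} (hp : Hyperbolic p) {z : ℂ}
    (hz : (p.map (algebraMap ℝ ℂ)).IsRoot z) : z.im = 0 :=
  hp z (by rwa [aeval_def, eval₂_eq_eval_map])

lemma hyperbolic_of_forall_im_pos {p : ℝ[X]} (h : ∀ z : ℂ, 0 < z.im → aeval z p ≠ 0) :
    Hyperbolic p := by
  intro z hz
  by_contra hne
  rcases lt_or_gt_of_ne hne with hneg | hpos
  · exact h (starRingEnd ℂ z) (by simpa using hneg) (by rw [aeval_conj, hz, map_zero])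
  · exact h z hpos hz

lemma nuijPencil_zero (d : ℕ) (a : ℕ → ℝ) (p : ℝ[X]) : NuijPencil d a p 0 = p := by
  rw [NuijPencil, Finset.sum_eq_zero, add_zero]
  intro k hk
  rw [zero_pow (by rw [mem_Icc] at hk; omega), mul_zero, zero_smul]

lemma nuijPencil_X_pow (d : ℕ) (a : ℕ → ℝ) (s : ℝ) :
    NuijPencil d a (X ^ d) s =
      X ^ d + ∑ k ∈ Icc 1 d, C (a k * s ^ k * d.descFactorial k) * X ^ (d - k) := by
  rw [NuijPencil]
  congr 1
  refine Finset.sum_congr rfl fun k _ => ?_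
  rw [iterate_derivative_X_pow_eq_C_mul, smul_eq_C_mul, ← mul_assoc, ← C_mul]

lemma natDegree_nuijPencil_X_pow (d : ℕ) (a : ℕ → ℝ) (s : ℝ) :
    (NuijPencil d a (X ^ d) s).natDegree = d := by
  rw [nuijPencil_X_pow]
  refine natDegree_add_eq_left_of_degree_lt ?_ |>.trans (natDegree_X_pow d)
  refine (degree_sum_le _ _).trans_lt ?_
  rw [degree_X_pow]
  refine (Finset.sup_lt_iff (WithBot.bot_lt_coe d)).2 fun k hk => ?_
  refine (degree_C_mul_X_pow_le _ _).trans_lt ?_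
  rw [mem_Icc] at hk
  exact Nat.cast_lt.2 (by omega)

lemma aeval_mul_nuijPencil_X_pow (d : ℕ) (a : ℕ → ℝ) (s : ℝ) (z : ℂ) :
    aeval (s * z) (NuijPencil d a (X ^ d) s) = s ^ d * aeval z (NuijPencil d a (X ^ d) 1) := by
  simp only [nuijPencil_X_pow, map_add, map_sum, map_mul, map_pow, aeval_X, aeval_C, one_pow,
    mul_one, mul_add, Finset.mul_sum]
  congr 1
  · ring
  · refine Finset.sum_congr rfl fun k hk => ?_
    obtain ⟨j, rfl⟩ := Nat.exists_eq_add_of_le (mem_Icc.1 hk).2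
    simp only [Nat.add_sub_cancel_left, Complex.coe_algebraMap]
    push_cast
    ring

lemma Hyperbolic.nuijPencil_X_pow {d : ℕ} {a : ℕ → ℝ}
    (hq : Hyperbolic (NuijPencil d a (X ^ d) 1)) (s : ℝ) :
    Hyperbolic (NuijPencil d a (X ^ d) s) := by
  rcases eq_or_ne s 0 with rfl | hs
  · rw [nuijPencil_zero]
    exact hyperbolic_X_pow d
  intro z hz
  have hs' : (s : ℂ) ≠ 0 := Complex.ofReal_ne_zero.2 hs
  rw [← mul_div_cancel₀ z hs', aeval_mul_nuijPencil_X_pow] at hz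
  have := hq _ ((mul_eq_zero.1 hz).resolve_left (pow_ne_zero _ hs'))
  rw [← mul_div_cancel₀ z hs', Complex.im_ofReal_mul, this, mul_zero]

lemma apolar_taylor_map_nuijPencil (d : ℕ) (a : ℕ → ℝ) (p : ℝ[X]) (s : ℝ) (w : ℂ) :
    apolar d (taylor w (p.map (algebraMap ℝ ℂ)))
        ((NuijPencil d a (X ^ d) s).map (algebraMap ℝ ℂ)) =
      d ! * aeval w (NuijPencil d a p s) := by
  have key : ∀ k ≤ d, apolar d (taylor w (p.map (algebraMap ℝ ℂ)))
      (derivative^[k] (X ^ d)) = d ! * aeval w (derivative^[k] p) := fun k hk => by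
    rw [apolar_taylor_iterate_derivative_X_pow _ _ hk, aeval_def, eval₂_eq_eval_map,
      iterate_derivative_map]
  simp only [NuijPencil, Polynomial.map_add, Polynomial.map_sum, Polynomial.map_smul,
    Polynomial.map_pow, map_X, map_add, map_sum, map_smul]
  rw [← Function.iterate_zero_apply derivative (X ^ d), key 0 d.zero_le,
    Function.iterate_zero_apply, mul_add, Finset.mul_sum]
  congr 1
  refine Finset.sum_congr rfl fun k hk => ?_
  rw [← iterate_derivative_map, Polynomial.map_pow, map_X, key k (mem_Icc.1 hk).2, smul_eq_mul,
    Complex.real_smul, Complex.coe_algebraMap]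
  ring

theorem isNuijSeq_of_hyperbolic {d : ℕ} {a : ℕ → ℝ}
    (hq : Hyperbolic (NuijPencil d a (X ^ d) 1)) : IsNuijSeq d a := by
  intro p hpd hp s
  refine hyperbolic_of_forall_im_pos fun w hw hroot => ?_
  have hF : ∀ z, (taylor w (p.map (algebraMap ℝ ℂ))).IsRoot z → z.im < 0 := fun z hz => by
    have := hp.im_eq_zero_of_isRoot_map (by rwa [IsRoot, taylor_eval] at hz)
    rw [Complex.add_im] at this
    linarith
  have hpair := apolar_ne_zero (by rw [natDegree_taylor, natDegree_map, hpd])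
    (by rw [natDegree_map, natDegree_nuijPencil_X_pow]) hF
    fun z => (hq.nuijPencil_X_pow s).im_eq_zero_of_isRoot_map
  rw [apolar_taylor_map_nuijPencil, hroot, mul_zero] at hpair
  exact hpair rfl

/-- Theorem A: `a` is a Nuij sequence iff
`q_a(z) = z^d + ∑_{k=1}^d a_k (d!/(d-k)!) z^{d-k}` is hyperbolic. -/
theorem isNuijSeq_iff_hyperbolic (d : ℕ) (a : ℕ → ℝ) :
    IsNuijSeq d a ↔
      Hyperbolic ((X : Polynomial ℝ) ^ d +
        ∑ k ∈ Finset.Icc 1 d, Polynomial.C (a k * (d.descFactorial k : ℝ)) * X ^ (d - k)) := by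
  have hq : NuijPencil d a (X ^ d) 1 = X ^ d +
      ∑ k ∈ Finset.Icc 1 d, Polynomial.C (a k * (d.descFactorial k : ℝ)) * X ^ (d - k) := by
    simp [nuijPencil_X_pow]
  rw [← hq]
  exact ⟨fun h => h _ (natDegree_X_pow d) (hyperbolic_X_pow d) 1, isNuijSeq_of_hyperbolic⟩
end

section
/- If a = (a₁,…,a_d) and b = (b₁,…,b_d) are Nuij sequences, then their composition c = b ∘ a, defined by c_k = Σ_{i=0}^{k} a_i b_{k-i} with the convention a₀ = b₀ = 1, is also a Nuij sequence. -/
/-!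
Write `D` for differentiation. When `a₀ = 1`, the perturbation `p ↦ p_a(·, s)` is the operator
`A(D)` with symbol `A = ∑_{k ≤ d} a_k s^k X^k`, and likewise `p ↦ p_b(·, s)` is `B(D)`. Applying
the two in turn gives `(A B)(D)`, and since `D^m p = 0` for `m > deg p = d`, only the coefficients
of `A B` in degrees `≤ d` matter; these are `c_k s^k`. The first perturbation preserves the degree
and (as `a` is a Nuij sequence) hyperbolicity, so `b` being a Nuij sequence finishes the proof.
-/

open Polynomial

open Finset

section DerivativeOperator

variable {R : Type*} [CommSemiring R]

theorem degree_iterate_derivative_le (p : R[X]) (k : ℕ) :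
    (derivative^[k] p).degree ≤ p.degree := by
  induction k with
  | zero => rfl
  | succ k ih =>
    rw [Function.iterate_succ_apply']
    exact degree_derivative_le.trans ih

theorem degree_iterate_derivative_lt {p : R[X]} (hp : p ≠ 0) {k : ℕ} (hk : k ≠ 0) :
    (derivative^[k] p).degree < p.degree := by
  obtain ⟨k, rfl⟩ := Nat.exists_eq_succ_of_ne_zero hk
  rw [Function.iterate_succ_apply]
  exact (degree_iterate_derivative_le _ k).trans_lt (degree_derivative_lt hp)

theorem aeval_derivative_apply_of_natDegree_le (Q : R[X]) {p : R[X]} {d : ℕ}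
    (hp : p.natDegree ≤ d) :
    aeval (derivative : Module.End R R[X]) Q p
      = ∑ m ∈ range (d + 1), Q.coeff m • derivative^[m] p := by
  rw [aeval_eq_sum_range' (n := Q.natDegree + d + 1) (by omega)]
  simp only [LinearMap.sum_apply, LinearMap.smul_apply, Module.End.pow_apply]
  refine (sum_subset (range_subset_range.2 (by omega)) fun m _ hm => ?_).symm
  rw [iterate_derivative_eq_zero (by simp at hm; omega), smul_zero]

end DerivativeOperator

noncomputable def nuijSymbol (d : ℕ) (a : ℕ → ℝ) (s : ℝ) : ℝ[X] :=
  ∑ k ∈ range (d + 1), monomial k (a k * s ^ k)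

theorem coeff_nuijSymbol {d n : ℕ} (a : ℕ → ℝ) (s : ℝ) (hn : n ≤ d) :
    (nuijSymbol d a s).coeff n = a n * s ^ n := by
  simp [nuijSymbol, coeff_monomial, hn]

theorem coeff_nuijSymbol_mul {d m : ℕ} (a b : ℕ → ℝ) (s : ℝ) (hm : m ≤ d) :
    (nuijSymbol d a s * nuijSymbol d b s).coeff m
      = (∑ i ∈ range (m + 1), a i * b (m - i)) * s ^ m := by
  rw [coeff_mul, Nat.sum_antidiagonal_eq_sum_range_succ_mk, sum_mul]
  refine sum_congr rfl fun i hi => ?_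
  have hi : i ≤ m := Nat.lt_succ_iff.1 (mem_range.1 hi)
  rw [coeff_nuijSymbol a s (hi.trans hm), coeff_nuijSymbol b s ((m.sub_le i).trans hm),
    ← pow_mul_pow_sub s hi]
  ring

theorem nuijPencil_eq_aeval_nuijSymbol {d : ℕ} {a : ℕ → ℝ} (ha0 : a 0 = 1) {p : ℝ[X]}
    (hp : p.natDegree ≤ d) (s : ℝ) :
    NuijPencil d a p s = aeval (derivative : Module.End ℝ ℝ[X]) (nuijSymbol d a s) p := by
  rw [aeval_derivative_apply_of_natDegree_le _ hp, range_eq_Ico,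
    sum_eq_sum_Ico_succ_bot (Nat.succ_pos d), NuijPencil]
  congr 1
  · simp [coeff_nuijSymbol a s (Nat.zero_le d), ha0]
  · exact sum_congr rfl fun k hk =>
      by rw [coeff_nuijSymbol a s (Nat.lt_succ_iff.1 (mem_Ico.1 hk).2)]

theorem degree_nuijPencil (d : ℕ) (a : ℕ → ℝ) (p : ℝ[X]) (s : ℝ) :
    (NuijPencil d a p s).degree = p.degree := by
  rcases eq_or_ne p 0 with rfl | hp
  · simp [NuijPencil]
  refine degree_add_eq_left_of_degree_lt ((degree_sum_le _ _).trans_lt ?_)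
  refine (Finset.sup_lt_iff (bot_lt_iff_ne_bot.2 (degree_ne_bot.2 hp))).2 fun k hk => ?_
  exact (degree_smul_le _ _).trans_lt
    (degree_iterate_derivative_lt hp (by simp at hk; omega))

theorem natDegree_nuijPencil (d : ℕ) (a : ℕ → ℝ) (p : ℝ[X]) (s : ℝ) :
    (NuijPencil d a p s).natDegree = p.natDegree :=
  natDegree_eq_of_degree_eq (degree_nuijPencil d a p s)

theorem nuijPencil_nuijPencil {d : ℕ} {a b : ℕ → ℝ} (ha0 : a 0 = 1) (hb0 : b 0 = 1)
    {p : ℝ[X]} (hp : p.natDegree ≤ d) (s : ℝ) :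
    NuijPencil d b (NuijPencil d a p s) s
      = NuijPencil d (fun k => ∑ i ∈ range (k + 1), a i * b (k - i)) p s := by
  rw [nuijPencil_eq_aeval_nuijSymbol hb0 ((natDegree_nuijPencil d a p s).trans_le hp),
    nuijPencil_eq_aeval_nuijSymbol ha0 hp,
    nuijPencil_eq_aeval_nuijSymbol (by simp [ha0, hb0]) hp, ← Module.End.mul_apply, ← map_mul,
    mul_comm, aeval_derivative_apply_of_natDegree_le _ hp,
    aeval_derivative_apply_of_natDegree_le _ hp]
  refine sum_congr rfl fun m hm => ?_
  have hm : m ≤ d := Nat.lt_succ_iff.1 (mem_range.1 hm)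
  rw [coeff_nuijSymbol_mul a b s hm, coeff_nuijSymbol _ s hm]

/-- The composition of two Nuij sequences, given by
`c_k = ∑_{i=0}^k a_i b_{k-i}` with the convention `a₀ = b₀ = 1`,
is again a Nuij sequence. -/
theorem comp_isNuijSeq (d : ℕ) (a b : ℕ → ℝ) (ha0 : a 0 = 1) (hb0 : b 0 = 1)
    (ha : IsNuijSeq d a) (hb : IsNuijSeq d b) :
    IsNuijSeq d (fun k => ∑ i ∈ Finset.range (k + 1), a i * b (k - i)) := by
  intro p hp hyp s
  rw [← nuijPencil_nuijPencil ha0 hb0 hp.le]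
  exact hb _ ((natDegree_nuijPencil d a p s).trans hp) (ha p hp hyp s) s
end

section
/- Let x₁,…,x_d ∈ ℝ and let c_k be the k-th elementary symmetric polynomial in x₁,…,x_d. Then (c₁,…,c_d) is a Nuij sequence; in particular, if z^d + Σ_{k=1}^d c_k z^{d-k} is hyperbolic (i.e. c is in the image of the Viète map), then c is a Nuij sequence. Hence H₁^d ⊆ N_d, where H₁^d is the set of coefficient vectors of monic hyperbolic polynomials of degree d. -/
open Polynomial

/-!
The basic step is that `p + c • p'` stays hyperbolic for real `c`: at a non-real zero `z`,
`p'(z) / p(z) = ∑ 1 / (z - r)`, summed over the real roots `r` of `p`, would equal the real number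
`-1 / c`, whereas its imaginary part has the sign of `-Im z`. Composing these operators gives
`∏ᵢ (1 + xᵢ s D) = ∑ₖ eₖ(x) sᵏ Dᵏ`, the Nuij pencil of the elementary symmetric sequence.
A monic hyperbolic polynomial splits over `ℝ`, so by Vieta its coefficients are the elementary
symmetric functions of its negated roots.
-/

open Finset

namespace Hyperbolic

variable {p : ℝ[X]}

theorem aeval_ne_zero (hp : Hyperbolic p) {z : ℂ} (hz : z.im ≠ 0) : aeval z p ≠ 0 :=
  fun h => hz (hp z h)

theorem splits (hp : Hyperbolic p) : p.Splits := by
  by_cases hp0 : p = 0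
  · simp [hp0]
  refine Splits.of_splits_map_of_injective (algebraMap ℝ ℂ).injective (IsAlgClosed.splits _)
    fun z hz => ⟨z.re, Complex.ext rfl ?_⟩
  rw [mem_roots_map_of_injective (algebraMap ℝ ℂ).injective hp0, ← aeval_def] at hz
  simp [hp z hz]

theorem im_aeval_derivative_div_ne_zero (hp : Hyperbolic p) (hdeg : 0 < p.natDegree) {z : ℂ}
    (hz : z.im ≠ 0) : (aeval z (derivative p) / aeval z p).im ≠ 0 := by
  set P := p.map (algebraMap ℝ ℂ)
  have hPz : P.eval z ≠ 0 := by rw [eval_map_algebraMap]; exact hp.aeval_ne_zero hz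
  have hroots : P.roots ≠ 0 := (IsAlgClosed.splits P).roots_ne_zero (by simpa [P] using hdeg.ne')
  rw [← eval_map_algebraMap, ← eval_map_algebraMap, ← derivative_map,
    (IsAlgClosed.splits P).eval_derivative_div_eval_of_ne_zero hPz]
  have hterm : ∀ r ∈ P.roots, z.im * (1 / (z - r)).im < 0 := by
    intro r hr
    have hr : r.im = 0 := hp r (by
      rwa [mem_roots_map_of_injective (algebraMap ℝ ℂ).injective (by rintro rfl; simp at hdeg),
        ← aeval_def] at hr)
    have hzr : z - r ≠ 0 := fun h => hz (by simpa [hr] using congrArg Complex.im h)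
    rw [one_div, Complex.inv_im, Complex.sub_im, hr, sub_zero, mul_div_assoc', mul_neg]
    exact div_neg_of_neg_of_pos (neg_lt_zero.mpr (mul_self_pos.mpr hz))
      (Complex.normSq_pos.mpr hzr)
  have hsum : z.im * (P.roots.map fun r => 1 / (z - r)).sum.im < 0 := by
    rw [show ∀ M : Multiset ℂ, M.sum.im = (M.map Complex.im).sum from
      map_multiset_sum Complex.imAddGroupHom, Multiset.map_map,
      ← Multiset.sum_map_mul_left]
    simpa using Multiset.sum_lt_sum_of_nonempty hroots hterm
  exact fun h => hsum.ne (by rw [h, mul_zero])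

theorem add_smul_derivative (hp : Hyperbolic p) (c : ℝ) : Hyperbolic (p + c • derivative p) := by
  intro z hz
  by_contra hzim
  have hpz := hp.aeval_ne_zero hzim
  have hsum : aeval z p + c * aeval z (derivative p) = 0 := by simpa using hz
  have hdeg : 0 < p.natDegree := by
    by_contra! h
    rw [derivative_of_natDegree_zero (by omega)] at hsum
    simp_all
  have hc : (c : ℂ) ≠ 0 := by rintro hc; simp_all
  apply hp.im_aeval_derivative_div_ne_zero hdeg hzim
  have : aeval z (derivative p) / aeval z p = -(c : ℂ)⁻¹ := by
    field_simp
    linear_combination hsum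
  simp [this]

theorem sum_powerset_prod_smul_iterate_derivative {ι : Type*} [DecidableEq ι]
    (hp : Hyperbolic p) (y : ι → ℝ) (S : Finset ι) :
    Hyperbolic (∑ T ∈ S.powerset, (∏ i ∈ T, y i) • derivative^[#T] p) := by
  induction S using Finset.induction_on with
  | empty => simpa using hp
  | insert a S ha ih =>
    have hinsert : ∑ T ∈ S.powerset, (∏ i ∈ insert a T, y i) • derivative^[#(insert a T)] p
        = y a • derivative (∑ T ∈ S.powerset, (∏ i ∈ T, y i) • derivative^[#T] p) := by
      rw [map_sum, smul_sum]
      refine sum_congr rfl fun T hT => ?_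
      have haT : a ∉ T := fun h => ha (mem_powerset.mp hT h)
      rw [prod_insert haT, card_insert_of_notMem haT,
        Function.iterate_succ_apply', derivative_smul, smul_smul]
    rw [sum_powerset_insert ha, hinsert]
    exact ih.add_smul_derivative _

end Hyperbolic

theorem nuijPencil_eq_sum_range {d : ℕ} {a : ℕ → ℝ} (ha : a 0 = 1) (p : ℝ[X]) (s : ℝ) :
    NuijPencil d a p s = ∑ k ∈ range (d + 1), (a k * s ^ k) • derivative^[k] p := by
  rw [range_eq_Ico, sum_eq_sum_Ico_succ_bot d.succ_pos, Nat.succ_eq_add_one, zero_add,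
    Ico_add_one_right_eq_Icc]
  simp [NuijPencil, ha]

theorem sum_powerset_prod_mul_smul_iterate_derivative {ι : Type*} (S : Finset ι) (x : ι → ℝ)
    (s : ℝ) (p : ℝ[X]) :
    ∑ T ∈ S.powerset, (∏ i ∈ T, x i * s) • derivative^[#T] p
      = NuijPencil #S (fun k => ∑ t ∈ S.powersetCard k, ∏ i ∈ t, x i) p s := by
  rw [nuijPencil_eq_sum_range (by simp), sum_powerset]
  refine sum_congr rfl fun k _ => ?_
  rw [sum_mul, sum_smul]
  refine sum_congr rfl fun T hT => ?_
  obtain ⟨-, hTk⟩ := mem_powersetCard.mp hT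
  rw [hTk, prod_mul_distrib, prod_const, hTk]

theorem isNuijSeq_sum_powersetCard_prod {ι : Type*} (S : Finset ι) (x : ι → ℝ) :
    IsNuijSeq #S (fun k => ∑ t ∈ S.powersetCard k, ∏ i ∈ t, x i) := by
  classical
  intro p _ hp s
  rw [← sum_powerset_prod_mul_smul_iterate_derivative]
  exact hp.sum_powerset_prod_smul_iterate_derivative _ S

theorem isNuijSeq_esymm (M : Multiset ℝ) : IsNuijSeq (Multiset.card M) M.esymm := by
  have := isNuijSeq_sum_powersetCard_prod (univ : Finset M) (↑)
  simp_rw [← esymm_map_val, Multiset.map_univ_coe, card_univ, Multiset.card_coe] at this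
  exact this

theorem IsNuijSeq.congr {d : ℕ} {a b : ℕ → ℝ} (ha : IsNuijSeq d a)
    (hab : ∀ k ∈ Icc 1 d, a k = b k) : IsNuijSeq d b := by
  intro p hpd hp s
  convert ha p hpd hp s using 1
  exact congrArg (p + ·) (sum_congr rfl fun k hk => by rw [hab k hk])

theorem Hyperbolic.isNuijSeq_coeff {q : ℝ[X]} (hq : Hyperbolic q) (hmon : q.Monic) :
    IsNuijSeq q.natDegree (fun k => q.coeff (q.natDegree - k)) := by
  have hcard : Multiset.card (q.roots.map Neg.neg) = q.natDegree := by
    rw [Multiset.card_map, splits_iff_card_roots.mp hq.splits]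
  refine (hcard ▸ isNuijSeq_esymm (q.roots.map Neg.neg)).congr fun k hk => ?_
  rw [coeff_eq_esymm_roots_of_splits hq.splits (Nat.sub_le _ _),
    Nat.sub_sub_self (mem_Icc.mp hk).2, hmon.leadingCoeff, one_mul, Multiset.esymm_neg]

section MonicOfCoeffs

variable (d : ℕ) (c : ℕ → ℝ)

theorem degree_sum_C_mul_X_pow_sub_lt :
    (∑ k ∈ Icc 1 d, C (c k) * X ^ (d - k)).degree < (d : WithBot ℕ) := by
  refine (degree_sum_le _ _).trans_lt ((Finset.sup_lt_iff (WithBot.bot_lt_coe d)).mpr ?_)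
  intro k hk
  refine (degree_C_mul_X_pow_le _ _).trans_lt ?_
  have := mem_Icc.mp hk
  exact WithBot.coe_lt_coe.mpr (Nat.sub_lt (by omega) (by omega))

theorem natDegree_X_pow_add_sum_C_mul_X_pow_sub :
    (X ^ d + ∑ k ∈ Icc 1 d, C (c k) * X ^ (d - k)).natDegree = d := by
  rw [natDegree_add_eq_left_of_degree_lt (by simpa using degree_sum_C_mul_X_pow_sub_lt d c),
    natDegree_X_pow]

theorem coeff_X_pow_add_sum_C_mul_X_pow_sub {k : ℕ} (hk : k ∈ Icc 1 d) :
    (X ^ d + ∑ j ∈ Icc 1 d, C (c j) * X ^ (d - j)).coeff (d - k) = c k := by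
  have := mem_Icc.mp hk
  rw [coeff_add, coeff_X_pow, if_neg (by omega), zero_add, finsetSum_coeff,
    sum_eq_single_of_mem k hk]
  · simp
  · intro j hj hjk
    have := mem_Icc.mp hj
    rw [coeff_C_mul_X_pow, if_neg (by omega)]

end MonicOfCoeffs

/-- The elementary symmetric polynomials of any reals `x₁, …, x_d` form a Nuij
sequence, and more generally any coefficient vector of a monic hyperbolic
polynomial of degree `d` is a Nuij sequence:  `H₁^d ⊆ N_d`. -/
theorem esymm_isNuijSeq (d : ℕ) :
    (∀ x : Fin d → ℝ,
      IsNuijSeq d (fun k =>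
        ∑ t ∈ Finset.powersetCard k (Finset.univ : Finset (Fin d)), ∏ i ∈ t, x i)) ∧
    (∀ c : ℕ → ℝ,
      Hyperbolic ((X : Polynomial ℝ) ^ d +
        ∑ k ∈ Finset.Icc 1 d, Polynomial.C (c k) * X ^ (d - k)) →
      IsNuijSeq d c) := by
  refine ⟨fun x => ?_, fun c hq => ?_⟩
  · simpa using isNuijSeq_sum_powersetCard_prod univ x
  · have hmon := monic_X_pow_add (degree_sum_C_mul_X_pow_sub_lt d c)
    have := hq.isNuijSeq_coeff hmon
    rw [natDegree_X_pow_add_sum_C_mul_X_pow_sub] at this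
    exact this.congr fun k hk => coeff_X_pow_add_sum_C_mul_X_pow_sub d c hk
end

section
/- Let T = T_{α,β} be the d×d matrix with diagonal entries α and off-diagonal entries β, and let D be a diagonal matrix with diagonal entries λ₁,…,λ_d. Then det(zI + D + sT) = p(z) + Σ_{k=1}^d a_k s^k p^{(k)}(z), where p(z) = ∏_{i=1}^d (z + λ_i) and a_k = (1/k!)·(α-β)^{k-1}(α+(k-1)β). -/
/-!
Write `c = s(α - β)`. Then `zI + D + sT = diag(z + c + λᵢ) + sβ·J` with `J` the all-ones matrix,
and the matrix determinant lemma for this rank-one update of a diagonal matrix gives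
`det = p(w) + sβ·p'(w)` at `w = z + c` (first where every `w + λᵢ ≠ 0`, then everywhere, both
sides being polynomials in `w`). Expanding `p` and `p'` in Taylor series around `z`, the
coefficient of `p^{(k)}(z)` is `c^k/k! + sβ·c^{k-1}/(k-1)!`, which is exactly `a_k s^k`.
-/

open Polynomial

open Matrix Finset
open scoped Nat

section RankOne

variable {K ι : Type*} [Field K] [Fintype ι] [DecidableEq ι]

theorem Matrix.det_diagonal_add_const_of_ne_zero {μ : ι → K} (hμ : ∀ i, μ i ≠ 0) (c : K) :
    det (diagonal μ + of fun _ _ => c) = ∏ i, μ i + c * ∑ i, ∏ j ∈ univ.erase i, μ j := by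
  have hJ : (of fun _ _ => c : Matrix ι ι K)
      = replicateCol Unit (fun _ => c) * replicateRow Unit (fun _ => (1 : K)) := by
    ext; simp [mul_apply]
  have hdet : IsUnit (diagonal μ).det := by
    simpa [isUnit_iff_ne_zero, prod_ne_zero_iff] using hμ
  have hinv : (diagonal μ)⁻¹ = diagonal μ⁻¹ :=
    inv_eq_right_inv (by simp [diagonal_mul_diagonal, hμ])
  rw [hJ, det_add_replicateCol_mul_replicateRow hdet, hinv, det_diagonal, det_unique]
  simp only [PUnit.default_eq_unit, add_apply, one_apply_eq, mul_apply, replicateRow_apply,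
    diagonal_apply, Pi.inv_apply, mul_ite, one_mul, mul_zero, sum_ite_eq', mem_univ, ↓reduceIte,
    replicateCol_apply, mul_add, mul_one, mul_sum, add_right_inj]
  refine sum_congr rfl fun i _ => ?_
  rw [← mul_prod_erase univ μ (mem_univ i)]
  field_simp [hμ i]

theorem Matrix.det_diagonal_add_const_eq_eval [Infinite K] (lam : ι → K) (c w : K) :
    det (diagonal (fun i => w + lam i) + of fun _ _ => c)
      = (∏ i, (X + C (lam i))).eval w + c * (derivative (∏ i, (X + C (lam i)))).eval w := by
  set P : K[X] := det (diagonal (fun i => X + C (lam i)) + of fun _ _ => C c)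
  have hP (t : K) : P.eval t = det (diagonal (fun i => t + lam i) + of fun _ _ => c) := by
    rw [← coe_evalRingHom, RingHom.map_det]
    congr 1
    ext i j
    by_cases h : i = j <;> simp [h]
  suffices P = ∏ i, (X + C (lam i)) + C c * derivative (∏ i, (X + C (lam i))) by
    simp [← hP, this]
  refine eq_of_infinite_eval_eq _ _ ((Set.finite_range fun i => -lam i).infinite_compl.mono ?_)
  intro t ht
  have hne (i : ι) : t + lam i ≠ 0 := fun h => ht ⟨i, by linear_combination -h⟩
  simp [hP, det_diagonal_add_const_of_ne_zero hne, derivative_prod_finset, eval_prod,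
    eval_finsetSum]

end RankOne

theorem Polynomial.eval_add_eq_sum_range_iterate_derivative {K : Type*} [Field K] [CharZero K]
    {p : K[X]} {n : ℕ} (hp : p.natDegree < n) (z c : K) :
    p.eval (z + c) = ∑ k ∈ range n, (derivative^[k] p).eval z * c ^ k / k ! := by
  rw [add_comm, ← taylor_eval, eval_eq_sum_range' (by rwa [natDegree_taylor])]
  refine sum_congr rfl fun k _ => ?_
  rw [taylor_coeff, ← factorial_smul_hasseDeriv]
  simp only [nsmul_eq_mul, Module.End.mul_apply, Module.End.natCast_apply, eval_mul, eval_natCast,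
    mul_assoc]
  rw [mul_div_cancel_left₀ _ (Nat.cast_ne_zero.2 k.factorial_ne_zero)]

theorem eval_nuijPencil (d : ℕ) (a : ℕ → ℝ) (p : ℝ[X]) (s z : ℝ) :
    (NuijPencil d a p s).eval z
      = p.eval z + ∑ k ∈ range d, a (k + 1) * s ^ (k + 1) * (derivative^[k + 1] p).eval z := by
  rw [NuijPencil, ← Finset.Ico_add_one_right_eq_Icc, sum_Ico_eq_sum_range]
  simp [eval_finsetSum, add_comm 1]

theorem toeplitz_coeff_mul_pow_succ (α β s : ℝ) (k : ℕ) :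
    1 / ((k + 1)! : ℝ) * (α - β) ^ k * (α + (((k + 1 : ℕ) : ℝ) - 1) * β) * s ^ (k + 1)
      = (s * (α - β)) ^ (k + 1) / (k + 1)! + s * β * ((s * (α - β)) ^ k / k !) := by
  rw [Nat.factorial_succ, Nat.cast_mul, mul_pow, mul_pow]
  field_simp
  push_cast
  ring

/-- With `T = T_{α,β}`, `D = diag(λ₁,…,λ_d)` and `p(z) = ∏ (z + λᵢ)`, one has
`det(zI + D + sT) = p(z) + ∑_{k=1}^d a_k s^k p^{(k)}(z)` where
`a_k = (1/k!)(α-β)^{k-1}(α+(k-1)β)`. -/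
theorem det_toeplitz_pencil (d : ℕ) (α β : ℝ) (lam : Fin d → ℝ) (z s : ℝ) :
    Matrix.det (z • (1 : Matrix (Fin d) (Fin d) ℝ) + Matrix.diagonal lam
        + s • Matrix.of (fun i j : Fin d => if i = j then α else β))
      = Polynomial.eval z
          (NuijPencil d
            (fun k => (1 / (Nat.factorial k : ℝ)) * (α - β) ^ (k - 1) * (α + ((k : ℝ) - 1) * β))
            (∏ i, (X + Polynomial.C (lam i))) s) := by
  set p : ℝ[X] := ∏ i, (X + C (lam i))
  set c := s * (α - β)
  have hM : z • (1 : Matrix (Fin d) (Fin d) ℝ) + diagonal lam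
        + s • of (fun i j : Fin d => if i = j then α else β)
      = diagonal (fun i => (z + c) + lam i) + of fun _ _ => s * β := by
    ext i j
    by_cases h : i = j
    · subst h
      simp only [smul_of, Matrix.add_apply, Matrix.smul_apply, one_apply_eq, smul_eq_mul, mul_one,
        diagonal_apply_eq, of_apply, Pi.smul_apply, ↓reduceIte, c]
      ring
    · simp [h, one_apply_ne h]
  have hdeg : p.natDegree < d + 1 := by
    rw [natDegree_prod_of_monic _ _ fun i _ => monic_X_add_C (lam i)]
    simp
  have hdeg' : (derivative p).natDegree < d + 1 :=
    ((natDegree_derivative_le p).trans (Nat.sub_le _ _)).trans_lt hdeg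
  rw [hM, det_diagonal_add_const_eq_eval, eval_nuijPencil,
    eval_add_eq_sum_range_iterate_derivative hdeg,
    eval_add_eq_sum_range_iterate_derivative hdeg', sum_range_succ', sum_range_succ _ d]
  simp only [← Function.iterate_succ_apply, iterate_derivative_eq_zero hdeg, eval_zero, zero_mul,
    zero_div, add_zero, Function.iterate_zero_apply, pow_zero, Nat.factorial_zero, Nat.cast_one,
    mul_one, div_one, Nat.add_sub_cancel, toeplitz_coeff_mul_pow_succ, mul_sum,
    add_right_comm _ (eval z p), ← sum_add_distrib]
  rw [add_comm]
  congr 1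
  refine sum_congr rfl fun k _ => ?_
  ring
end

section
/- If a Nuij sequence a ∈ ℝ^d admits a universal determinantal representation with associated symmetric matrix A, then for every j all j×j principal minors of A are equal; in particular all diagonal entries of A are equal to some α, and the squares of all off-diagonal entries are equal to some β². -/
open Polynomial

/-!
Take `z = 0` and `λ_i = 0` for `i ∈ S`, `λ_i = 1` otherwise. Expanding `det (diag λ + s A)` by
multilinearity in the rows gives `∑_{T ⊇ S} s^|T| det A_T`, whose coefficient of `s^|S|` is the
principal minor `det A_S`. On the other side, `p = X^|S| (X + 1)^(d - |S|)` and evaluating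
`p^(m)` at `0` picks out `m! p_m`, so the same coefficient is `|S|! a_|S|`. Hence every `k × k`
principal minor equals `k! a_k`; the `1 × 1` and `2 × 2` cases give `A_ii = a_1` and
`A_ij² = a_1² - 2 a_2`.
-/

open Finset
open scoped Nat

namespace Matrix

variable {n R : Type*} [DecidableEq n] [CommRing R]

theorem det_diagonal_add_eq_sum [Fintype n] (D : n → R) (B : Matrix n n R) :
    det (diagonal D + B) = ∑ T : Finset n, (∏ i ∈ Tᶜ, D i) *
      det (B.submatrix (Subtype.val : {x // x ∈ T} → n) Subtype.val) := by
  rw [add_comm]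
  change detRowAlternating.toMultilinearMap (B.row + (diagonal D).row) = _
  rw [MultilinearMap.map_add_univ]
  refine sum_congr rfl fun T _ => ?_
  have hrows : T.piecewise B.row (diagonal D).row =
      Tᶜ.piecewise (fun i => D i • T.piecewise B.row (1 : Matrix n n R).row i)
        (T.piecewise B.row (1 : Matrix n n R).row) := by
    ext i j
    by_cases hi : i ∈ T <;> simp [hi, row, Finset.piecewise, diagonal_apply, one_apply]
  rw [hrows, MultilinearMap.map_piecewise_smul, smul_eq_mul]
  exact congrArg _ (det_piecewise_one_eq_submatrix_det B T)

theorem det_diagonal_ite_add_smul [Fintype n] (B : Matrix n n R) (S : Finset n) (s : R) :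
    det (diagonal (fun i => if i ∈ S then 0 else 1) + s • B) =
      (∑ T with S ⊆ T,
        C (det (B.submatrix (Subtype.val : {x // x ∈ T} → n) Subtype.val)) * X ^ #T).eval s := by
  rw [det_diagonal_add_eq_sum, eval_finsetSum, sum_filter]
  refine sum_congr rfl fun T _ => ?_
  simp only [submatrix_smul, Pi.smul_apply, det_smul, Fintype.card_coe]
  split_ifs with hST
  · rw [prod_eq_one fun i hi => if_neg fun hiS => mem_compl.mp hi (hST hiS), one_mul,
      eval_mul, eval_C, eval_pow, eval_X, mul_comm]
  · obtain ⟨i, hiS, hiT⟩ := not_subset.mp hST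
    rw [prod_eq_zero (mem_compl.mpr hiT) (by rw [if_pos hiS]), zero_mul]

theorem det_submatrix_singleton (B : Matrix n n R) (i : n) :
    det (B.submatrix (Subtype.val : {x // x ∈ ({i} : Finset n)} → n) Subtype.val) = B i i := by
  let _ : Unique {x // x ∈ ({i} : Finset n)} :=
    ⟨⟨⟨i, mem_singleton_self i⟩⟩, fun x => Subtype.ext (mem_singleton.mp x.2)⟩
  rw [det_unique]
  rfl

theorem det_submatrix_pair (B : Matrix n n R) {i j : n} (hij : i ≠ j) :
    det (B.submatrix (Subtype.val : {x // x ∈ ({i, j} : Finset n)} → n) Subtype.val) =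
      B i i * B j j - B i j * B j i := by
  let f : Fin 2 → {x // x ∈ ({i, j} : Finset n)} := ![⟨i, by simp⟩, ⟨j, by simp⟩]
  have hf : Function.Bijective f := by
    refine (Fintype.bijective_iff_injective_and_card f).mpr
      ⟨?_, by rw [Fintype.card_coe, card_pair hij, Fintype.card_fin]⟩
    intro x y
    fin_cases x <;> fin_cases y <;> simp [f, hij, hij.symm]
  rw [← det_submatrix_equiv_self (Equiv.ofBijective f hf), det_fin_two]
  rfl

end Matrix

namespace Polynomial

variable {R : Type*} [CommSemiring R]

theorem eval_zero_iterate_derivative (p : R[X]) (m : ℕ) :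
    (derivative^[m] p).eval 0 = m ! * p.coeff m := by
  rw [← coeff_zero_eq_eval_zero, coeff_iterate_derivative, zero_add, Nat.descFactorial_self,
    nsmul_eq_mul]

theorem coeff_sum_superset_C_mul_X_pow {n : Type*} [Fintype n] [DecidableEq n]
    (f : Finset n → R) (S : Finset n) :
    (∑ T with S ⊆ T, C (f T) * X ^ #T).coeff #S = f S := by
  rw [finsetSum_coeff, sum_eq_single_of_mem S (by simp)]
  · simp
  · intro T hT hTS
    rw [coeff_C_mul_X_pow, if_neg]
    exact fun h => hTS (eq_of_subset_of_card_le (mem_filter.mp hT).2 h.ge).symm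

theorem coeff_prod_X_add_C_ite {n : Type*} [Fintype n] [DecidableEq n] (S : Finset n) :
    (∏ i, (X + C (if i ∈ S then 0 else 1)) : R[X]).coeff #S = 1 := by
  have hS : ∀ i ∈ S, (X + C (if i ∈ S then 0 else 1) : R[X]) = X := fun i hi => by simp [hi]
  have hSc : ∀ i ∈ Sᶜ, (X + C (if i ∈ S then 0 else 1) : R[X]) = X + 1 := fun i hi => by
    simp [mem_compl.mp hi]
  rw [← prod_mul_prod_compl S, prod_congr rfl hS, prod_congr rfl hSc, prod_const, prod_const,
    coeff_X_pow_mul', if_pos le_rfl, Nat.sub_self, coeff_zero_eq_eval_zero]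
  simp

end Polynomial

theorem eval_zero_nuijPencil (d : ℕ) (a : ℕ → ℝ) (p : ℝ[X]) (s : ℝ) :
    (NuijPencil d a p s).eval 0 =
      (C (p.coeff 0) + ∑ m ∈ Icc 1 d, C (a m * m ! * p.coeff m) * X ^ m).eval s := by
  simp only [NuijPencil, eval_add, eval_C, eval_finsetSum, eval_smul, smul_eq_mul, eval_mul,
    eval_pow, eval_X, eval_zero_iterate_derivative, coeff_zero_eq_eval_zero]
  congr 1
  exact sum_congr rfl fun m _ => by ring

/-- `∏ i, (X + C (lam i))` is the characteristic polynomial `det (X • 1 + diagonal lam)`; every monic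
hyperbolic polynomial of degree `d` is of this form. -/
def HasUniversalDetRep (d : ℕ) (a : ℕ → ℝ) (A : Matrix (Fin d) (Fin d) ℝ) : Prop :=
  ∀ (lam : Fin d → ℝ) (z s : ℝ),
    Matrix.det (z • (1 : Matrix (Fin d) (Fin d) ℝ) + Matrix.diagonal lam + s • A)
      = Polynomial.eval z (NuijPencil d a (∏ i, (X + Polynomial.C (lam i))) s)

namespace HasUniversalDetRep

variable {d : ℕ} {a : ℕ → ℝ} {A : Matrix (Fin d) (Fin d) ℝ}

theorem det_submatrix (hrep : HasUniversalDetRep d a A) {S : Finset (Fin d)} (hS : S.Nonempty) :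
    (A.submatrix (Subtype.val : {x // x ∈ S} → Fin d) Subtype.val).det = a #S * (#S)! := by
  set lam : Fin d → ℝ := fun i => if i ∈ S then 0 else 1
  set p : ℝ[X] := ∏ i, (X + C (lam i))
  have hpoly : ∑ T with S ⊆ T,
      C (A.submatrix (Subtype.val : {x // x ∈ T} → Fin d) Subtype.val).det * X ^ #T =
        C (p.coeff 0) + ∑ m ∈ Icc 1 d, C (a m * m ! * p.coeff m) * X ^ m :=
    Polynomial.funext fun s => by
      rw [← Matrix.det_diagonal_ite_add_smul, ← eval_zero_nuijPencil, ← hrep lam 0 s,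
        zero_smul, zero_add]
  have hk : #S ∈ Icc 1 d :=
    mem_Icc.mpr ⟨hS.card_pos, (card_le_univ S).trans_eq (Fintype.card_fin d)⟩
  have hcoeff := congrArg (coeff · #S) hpoly
  simp only [coeff_sum_superset_C_mul_X_pow] at hcoeff
  rw [hcoeff, coeff_add, coeff_C, if_neg hS.card_pos.ne',
    zero_add, finsetSum_coeff, sum_eq_single_of_mem _ hk, coeff_C_mul_X_pow, if_pos rfl,
    coeff_prod_X_add_C_ite, mul_one]
  intro m _ hm
  rw [coeff_C_mul_X_pow, if_neg (Ne.symm hm)]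

end HasUniversalDetRep

/-- If a Nuij sequence `a` admits a universal determinantal representation with
symmetric matrix `A`, then all principal minors of `A` of a given size are
equal; in particular the diagonal entries are all equal to some `α` and the
squares of the off-diagonal entries are all equal to some `β²`. -/
theorem principal_minors_equal (d : ℕ) (a : ℕ → ℝ) (A : Matrix (Fin d) (Fin d) ℝ)
    (hA : A.IsSymm)
    (hrep : ∀ (lam : Fin d → ℝ) (z s : ℝ),
      Matrix.det (z • (1 : Matrix (Fin d) (Fin d) ℝ) + Matrix.diagonal lam + s • A)
        = Polynomial.eval z (NuijPencil d a (∏ i, (X + Polynomial.C (lam i))) s)) :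
    (∀ S T : Finset (Fin d), S.card = T.card →
      Matrix.det (A.submatrix (Subtype.val : {x // x ∈ S} → Fin d) Subtype.val)
        = Matrix.det (A.submatrix (Subtype.val : {x // x ∈ T} → Fin d) Subtype.val)) ∧
    (∃ α : ℝ, ∀ i, A i i = α) ∧
    (∃ β : ℝ, ∀ i j, i ≠ j → (A i j) ^ 2 = β ^ 2) := by
  have hminor := fun {S : Finset (Fin d)} (hS : S.Nonempty) =>
    HasUniversalDetRep.det_submatrix hrep hS
  have hdiag : ∀ i, A i i = a 1 := fun i => by
    simpa [Matrix.det_submatrix_singleton] using hminor (singleton_nonempty i)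
  have hoff : ∀ i j, i ≠ j → A i j ^ 2 = a 1 ^ 2 - 2 * a 2 := fun i j hij => by
    have h2 := hminor (insert_nonempty i {j})
    rw [Matrix.det_submatrix_pair A hij, hdiag, hdiag, hA.apply i j, card_pair hij] at h2
    norm_num at h2
    linarith
  refine ⟨fun S T hST => ?_, ⟨a 1, hdiag⟩, ?_⟩
  · rcases S.eq_empty_or_nonempty with rfl | hS
    · rw [card_empty, eq_comm, card_eq_zero] at hST
      rw [hST]
    · rw [hminor hS, hminor (card_pos.mp (hST ▸ hS.card_pos)), hST]
  · by_cases h : ∃ i j : Fin d, i ≠ j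
    · obtain ⟨i, j, hij⟩ := h
      exact ⟨A i j, fun k l hkl => by rw [hoff k l hkl, hoff i j hij]⟩
    · exact ⟨0, fun i j hij => absurd ⟨i, j, hij⟩ h⟩
end

section
/- Let A be a real symmetric d×d matrix (d ≥ 3) all of whose diagonal entries equal α, with all off-diagonal entries equal to ±β for a fixed β ≠ 0, and such that all 3×3 principal minors of A are equal. Then there exists ξ ∈ {-1, 1} such that A is sign-equivalent to T_{α, ξβ}: there is a diagonal matrix E with entries ±1 such that E·A·E = T_{α, ξ|β|}; in particular A has the same principal minors of every size as T_{α, ξ|β|}. -/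
/-!
The principal minor of `A` on `{i, j, k}` is `α³ - 3αβ² + 2 A_ij A_ik A_jk`, so equal `3 × 3`
minors make every triangle product `A_ij A_ik A_jk` one and the same value `ξ |β| β²`.
Switching signs relative to a base index `z`, with `ε_i = A_zi / β`, then turns every
off-diagonal entry into `ε_i A_ij ε_j = A_zi A_ij A_zj / β² = ξ |β|`. Conjugation by a diagonal
sign matrix changes each principal minor by a square of signs, i.e. not at all.
-/

open Matrix

namespace Matrix

variable {n m R : Type*}

section CommRing

variable [CommRing R]

theorem submatrix_diagonal_mul_mul_diagonal [Fintype n] [DecidableEq n] [Fintype m]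
    [DecidableEq m] (ε : n → R) (A : Matrix n n R) (e : m → n) :
    (diagonal ε * A * diagonal ε).submatrix e e
      = diagonal (ε ∘ e) * A.submatrix e e * diagonal (ε ∘ e) := by
  ext a b
  simp [mul_diagonal, diagonal_mul]

theorem det_submatrix_diagonal_mul_mul_diagonal [Fintype n] [DecidableEq n] [Fintype m]
    [DecidableEq m] {ε : n → R} (hε : ∀ i, ε i ^ 2 = 1) (A : Matrix n n R) (e : m → n) :
    det ((diagonal ε * A * diagonal ε).submatrix e e) = det (A.submatrix e e) := by
  rw [submatrix_diagonal_mul_mul_diagonal, det_mul, det_mul, det_diagonal]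
  have hsq : (∏ a, (ε ∘ e) a) ^ 2 = 1 := by
    rw [← Finset.prod_pow]
    exact Finset.prod_eq_one fun a _ => hε (e a)
  linear_combination det (A.submatrix e e) * hsq

theorem det_submatrix_insert_insert_singleton [DecidableEq n] (A : Matrix n n R) {i j k : n}
    (hij : i ≠ j) (hik : i ≠ k) (hjk : j ≠ k) :
    det (A.submatrix (Subtype.val : {x // x ∈ ({i, j, k} : Finset n)} → n) Subtype.val)
      = det !![A i i, A i j, A i k; A j i, A j j, A j k; A k i, A k j, A k k] := by
  set s : Finset n := {i, j, k}
  have hmem : ∀ a, ![i, j, k] a ∈ s := by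
    intro a
    fin_cases a <;> simp [s]
  have hinj : Function.Injective fun a => (⟨![i, j, k] a, hmem a⟩ : s) := by
    intro a b hab
    have h : ![i, j, k] a = ![i, j, k] b := congrArg Subtype.val hab
    fin_cases a <;> fin_cases b <;> simp_all
  have hcard : Fintype.card (Fin 3) = Fintype.card s := by
    rw [Fintype.card_fin, Fintype.card_coe, Finset.card_eq_three.2 ⟨i, j, k, hij, hik, hjk, rfl⟩]
  let e : Fin 3 ≃ s :=
    Equiv.ofBijective _ ((Fintype.bijective_iff_injective_and_card _).2 ⟨hinj, hcard⟩)
  rw [← det_submatrix_equiv_self e]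
  congr 1
  ext a b
  fin_cases a <;> fin_cases b <;> rfl

theorem det_submatrix_triple_of_isSymm [DecidableEq n] {A : Matrix n n R} (hA : A.IsSymm)
    {α b : R} (hdiag : ∀ i, A i i = α) (hoff : ∀ i j, i ≠ j → A i j ^ 2 = b) {i j k : n}
    (hij : i ≠ j) (hik : i ≠ k) (hjk : j ≠ k) :
    det (A.submatrix (Subtype.val : {x // x ∈ ({i, j, k} : Finset n)} → n) Subtype.val)
      = α ^ 3 - 3 * α * b + 2 * (A i j * A i k * A j k) := by
  rw [det_submatrix_insert_insert_singleton A hij hik hjk, det_fin_three]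
  simp only [hdiag, hA.apply i j, hA.apply i k, hA.apply j k, of_apply, cons_val', cons_val_zero,
    cons_val_fin_one, cons_val_one, cons_val]
  linear_combination (-α) * (hoff i j hij + hoff i k hik + hoff j k hjk)

end CommRing

theorem exists_sign_diagonal_mul_mul_diagonal_eq {𝕜 : Type*} [Field 𝕜] [Fintype n]
    [DecidableEq n] {A : Matrix n n 𝕜} (hA : A.IsSymm) {α β γ : 𝕜} (hβ : β ≠ 0)
    (hdiag : ∀ i, A i i = α) (hoff : ∀ i j, i ≠ j → A i j ^ 2 = β ^ 2) (hγ : γ ^ 2 = β ^ 2)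
    (htri : ∀ i j k, i ≠ j → i ≠ k → j ≠ k → A i j * A i k * A j k = γ * β ^ 2) :
    ∃ ε : n → 𝕜, (∀ i, ε i ^ 2 = 1) ∧
      diagonal ε * A * diagonal ε = of fun i j => if i = j then α else γ := by
  rcases isEmpty_or_nonempty n with hn | ⟨⟨z⟩⟩
  · exact ⟨1, fun i => isEmptyElim i, Subsingleton.elim _ _⟩
  let ε : n → 𝕜 := fun i => if i = z then γ / β else A z i / β
  have hε : ∀ i, ε i ^ 2 = 1 := by
    intro i
    by_cases hi : i = z
    · simp only [ε, if_pos hi, div_pow, hγ, div_self (pow_ne_zero 2 hβ)]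
    · simp only [ε, if_neg hi, div_pow, hoff z i (Ne.symm hi), div_self (pow_ne_zero 2 hβ)]
  have hentry : ∀ i j, i ≠ j → ε i * A i j * ε j = γ := by
    intro i j hij
    by_cases hi : i = z
    · subst hi
      simp only [ε, if_pos rfl, if_neg (Ne.symm hij)]
      field_simp
      linear_combination γ * hoff i j hij
    by_cases hj : j = z
    · subst hj
      simp only [ε, if_neg hi, if_pos rfl, hA.apply j i]
      field_simp
      linear_combination γ * hoff j i (Ne.symm hi)
    simp only [ε, if_neg hi, if_neg hj]
    field_simp
    linear_combination htri z i j (Ne.symm hi) (Ne.symm hj) hij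
  refine ⟨ε, hε, ?_⟩
  ext i j
  rw [mul_diagonal, diagonal_mul, of_apply]
  split_ifs with hij
  · subst hij
    linear_combination hdiag i * ε i ^ 2 + α * hε i
  · exact hentry i j hij

end Matrix

/-- If `A` is real symmetric (`d ≥ 3`) with diagonal `α`, off-diagonal entries
`±β` with `β ≠ 0`, and all `3×3` principal minors equal, then there is a sign
`ξ ∈ {-1,1}` and a diagonal sign matrix `E` with `E A E = T_{α, ξ|β|}`; in
particular `A` has the same principal minors of every size as `T_{α, ξ|β|}`. -/
theorem sign_equivalence_toeplitz (d : ℕ) (hd : 3 ≤ d)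
    (A : Matrix (Fin d) (Fin d) ℝ) (hA : A.IsSymm) (α β : ℝ) (hβ : β ≠ 0)
    (hdiag : ∀ i, A i i = α)
    (hoff : ∀ i j, i ≠ j → A i j = β ∨ A i j = -β)
    (hmin : ∀ S T : Finset (Fin d), S.card = 3 → T.card = 3 →
      Matrix.det (A.submatrix (Subtype.val : {x // x ∈ S} → Fin d) Subtype.val)
        = Matrix.det (A.submatrix (Subtype.val : {x // x ∈ T} → Fin d) Subtype.val)) :
    ∃ ξ : ℝ, (ξ = 1 ∨ ξ = -1) ∧
      ∃ ε : Fin d → ℝ, (∀ i, ε i = 1 ∨ ε i = -1) ∧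
        Matrix.diagonal ε * A * Matrix.diagonal ε
          = Matrix.of (fun i j : Fin d => if i = j then α else ξ * |β|) ∧
        ∀ S : Finset (Fin d),
          Matrix.det (A.submatrix (Subtype.val : {x // x ∈ S} → Fin d) Subtype.val)
            = Matrix.det ((Matrix.of fun i j : Fin d => if i = j then α else ξ * |β|).submatrix
                (Subtype.val : {x // x ∈ S} → Fin d) Subtype.val) := by
  have habs : ∀ i j, i ≠ j → |A i j| = |β| := fun i j h => by
    rcases hoff i j h with h | h <;> simp [h]
  have hsq : ∀ i j, i ≠ j → A i j ^ 2 = β ^ 2 := fun i j h => by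
    rw [← sq_abs, habs i j h, sq_abs]
  obtain ⟨z₀, z₁, z₂, h₀₁, h₀₂, h₁₂⟩ : ∃ a b c : Fin d, a ≠ b ∧ a ≠ c ∧ b ≠ c :=
    ⟨⟨0, by omega⟩, ⟨1, by omega⟩, ⟨2, by omega⟩, by simp [Fin.ext_iff]⟩
  set p := A z₀ z₁ * A z₀ z₂ * A z₁ z₂
  have htri : ∀ i j k, i ≠ j → i ≠ k → j ≠ k → A i j * A i k * A j k = p := by
    intro i j k hij hik hjk
    have h := hmin {i, j, k} {z₀, z₁, z₂} (Finset.card_eq_three.2 ⟨i, j, k, hij, hik, hjk, rfl⟩)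
      (Finset.card_eq_three.2 ⟨z₀, z₁, z₂, h₀₁, h₀₂, h₁₂, rfl⟩)
    rw [det_submatrix_triple_of_isSymm hA hdiag hsq hij hik hjk,
      det_submatrix_triple_of_isSymm hA hdiag hsq h₀₁ h₀₂ h₁₂] at h
    linarith
  have hp : |p| = |β| * β ^ 2 := by
    simp only [p, abs_mul, habs _ _ h₀₁, habs _ _ h₀₂, habs _ _ h₁₂, ← sq_abs β]
    ring
  obtain ⟨ξ, hξ, hpξ⟩ : ∃ ξ : ℝ, (ξ = 1 ∨ ξ = -1) ∧ p = ξ * |β| * β ^ 2 := by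
    rcases abs_choice p with h | h
    · exact ⟨1, .inl rfl, by linarith⟩
    · exact ⟨-1, .inr rfl, by linarith⟩
  obtain ⟨ε, hε, hconj⟩ := exists_sign_diagonal_mul_mul_diagonal_eq (γ := ξ * |β|) hA hβ hdiag
    hsq (by rcases hξ with rfl | rfl <;> simp)
    (fun i j k hij hik hjk => by rw [htri i j k hij hik hjk, hpξ])
  refine ⟨ξ, hξ, ε, fun i => sq_eq_one_iff.1 (hε i), hconj, fun S => ?_⟩
  rw [← hconj, det_submatrix_diagonal_mul_mul_diagonal hε]
end

section
/- If d ≥ 3 and a ∈ ℝ^d admits a universal determinantal representation via a special Toeplitz matrix T_{α,β}, then the pair (α, β) is uniquely determined by a; for d = 2 only α and β² are determined (both β and -β work). -/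
/-- Uniqueness of the Toeplitz data in a universal determinantal
representation: the associated sequence `a_k = (1/k!)(α-β)^{k-1}(α+(k-1)β)`
determines `(α, β)` uniquely when `d ≥ 3`, while for `d = 2` it only
determines `α` and `β²`. -/
theorem toeplitz_parameters_unique (d : ℕ) (α β α' β' : ℝ) :
    (3 ≤ d →
      (∀ k, 1 ≤ k → k ≤ d →
        (1 / (Nat.factorial k : ℝ)) * (α - β) ^ (k - 1) * (α + ((k : ℝ) - 1) * β)
          = (1 / (Nat.factorial k : ℝ)) * (α' - β') ^ (k - 1) * (α' + ((k : ℝ) - 1) * β')) →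
      α = α' ∧ β = β') ∧
    (d = 2 →
      (∀ k, 1 ≤ k → k ≤ d →
        (1 / (Nat.factorial k : ℝ)) * (α - β) ^ (k - 1) * (α + ((k : ℝ) - 1) * β)
          = (1 / (Nat.factorial k : ℝ)) * (α' - β') ^ (k - 1) * (α' + ((k : ℝ) - 1) * β')) →
      α = α' ∧ β ^ 2 = β' ^ 2) := by
  constructor
  · intro hd h
    have h1 := h 1 le_rfl (by omega)
    have h2 := h 2 (by omega) (by omega)
    have h3 := h 3 (by omega) hd
    norm_num [Nat.factorial] at h1 h2 h3
    have hα : α = α' := h1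
    subst hα
    have hβ2 : β ^ 2 = β' ^ 2 := by nlinarith [h2]
    have hβ3 : β ^ 3 = β' ^ 3 := by linear_combination 3*h3 + (3/2)*α*hβ2
    exact ⟨rfl, (Odd.strictMono_pow (R := ℝ) ⟨1, by norm_num⟩).injective hβ3⟩
  · intro hd h
    have h1 := h 1 (by omega) (by omega)
    have h2 := h 2 (by omega) (by omega)
    norm_num [Nat.factorial] at h1 h2
    have hα : α = α' := h1
    subst hα
    exact ⟨rfl, by nlinarith [h2]⟩
end

section
/- The Nuij sequence (1, 0, …, 0) admits a universal determinantal representation: for any reals λ₁,…,λ_d, letting D = diag(λ₁,…,λ_d), J the all-ones d×d matrix, and p(z) = ∏(z+λ_i), one has det(zI + D + sJ) = p(z) + s·p'(z). -/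
/-!
Over `ℝ[X]` the matrix is `A + s 𝟙𝟙ᵀ` with `A = diag(X + λᵢ)` and `det A = p ≠ 0`. The matrix
determinant lemma, written with the adjugate instead of `A⁻¹` so that it holds in any domain once
`det A ≠ 0` (pass to the fraction field), gives `det = p + s ∑ᵢ ∏_{j ≠ i} (X + λⱼ)`, and that sum is
`p'` by the product rule. Evaluating at `z` gives the identity.
-/

open Polynomial

namespace Matrix

variable {m R : Type*} [Fintype m] [DecidableEq m] [CommRing R]

theorem det_add_vecMulVec_of_isUnit {A : Matrix m m R} (hA : IsUnit A.det) (u v : m → R) :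
    (A + vecMulVec u v).det = A.det + v ⬝ᵥ (adjugate A *ᵥ u) := by
  have hquad : (replicateRow Unit v * A⁻¹ * replicateCol Unit u) () ()
      = Ring.inverse A.det * v ⬝ᵥ (adjugate A *ᵥ u) := by
    rw [Matrix.mul_assoc, ← replicateCol_mulVec, replicateRow_mul_replicateCol_apply, inv_def,
      smul_mulVec, dotProduct_smul, smul_eq_mul]
  rw [vecMulVec_eq Unit, det_add_replicateCol_mul_replicateRow hA, det_unique (1 + _), add_apply,
    one_apply_eq, hquad, mul_add, mul_one, Ring.mul_inverse_cancel_left _ _ hA]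

theorem det_add_vecMulVec_of_det_ne_zero [IsDomain R] {A : Matrix m m R} (hA : A.det ≠ 0)
    (u v : m → R) :
    (A + vecMulVec u v).det = A.det + v ⬝ᵥ (adjugate A *ᵥ u) := by
  let φ := algebraMap R (FractionRing R)
  have hφ : Function.Injective φ := IsFractionRing.injective R (FractionRing R)
  have hAφ : IsUnit (φ.mapMatrix A).det := by
    rw [← RingHom.map_det, isUnit_iff_ne_zero]
    exact (map_ne_zero_iff φ hφ).mpr hA
  have hmap : φ.mapMatrix (A + vecMulVec u v) = φ.mapMatrix A + vecMulVec (φ ∘ u) (φ ∘ v) := by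
    ext i j
    simp [vecMulVec_apply]
  have hadj : φ (v ⬝ᵥ (adjugate A *ᵥ u)) = (φ ∘ v) ⬝ᵥ (adjugate (φ.mapMatrix A) *ᵥ (φ ∘ u)) := by
    rw [RingHom.map_dotProduct, ← φ.map_adjugate]
    congr 1
    ext i
    exact RingHom.map_mulVec φ _ u i
  apply hφ
  rw [RingHom.map_det, hmap, map_add, hadj, RingHom.map_det]
  exact det_add_vecMulVec_of_isUnit hAφ _ _

theorem det_diagonal_add_smul_of_one [IsDomain R] {a : m → R} (ha : ∀ i, a i ≠ 0) (s : R) :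
    (diagonal a + s • of fun _ _ => (1 : R)).det
      = ∏ i, a i + s * ∑ i, ∏ j ∈ Finset.univ.erase i, a j := by
  have hJ : (s • of fun _ _ => 1 : Matrix m m R) = vecMulVec (fun _ => s) 1 := by
    ext
    simp [vecMulVec_apply]
  have hdet : (diagonal a).det ≠ 0 := by
    rw [det_diagonal]
    exact Finset.prod_ne_zero_iff.mpr fun i _ => ha i
  rw [hJ, det_add_vecMulVec_of_det_ne_zero hdet, det_diagonal, adjugate_diagonal]
  simp [dotProduct, mulVec_diagonal, Finset.mul_sum, mul_comm]

end Matrix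

namespace Polynomial

theorem derivative_prod_X_add_C {ι R : Type*} [CommSemiring R] [DecidableEq ι] (t : Finset ι)
    (c : ι → R) :
    derivative (∏ i ∈ t, (X + C (c i))) = ∑ i ∈ t, ∏ j ∈ t.erase i, (X + C (c j)) := by
  simp [derivative_prod_finset]

end Polynomial

/-- The Nuij sequence `(1, 0, …, 0)` has a universal determinantal
representation via the all-ones matrix `J = T_{1,1}`:
`det(zI + D + sJ) = p(z) + s p'(z)` where `p(z) = ∏ (z + λᵢ)`. -/
theorem det_all_ones_pencil (d : ℕ) (lam : Fin d → ℝ) (z s : ℝ) :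
    Matrix.det (z • (1 : Matrix (Fin d) (Fin d) ℝ) + Matrix.diagonal lam
        + s • Matrix.of (fun _ _ : Fin d => (1 : ℝ)))
      = Polynomial.eval z
          ((∏ i, (X + Polynomial.C (lam i)))
            + s • Polynomial.derivative (∏ i, (X + Polynomial.C (lam i)))) := by
  have hmat : z • (1 : Matrix (Fin d) (Fin d) ℝ) + Matrix.diagonal lam
        + s • Matrix.of (fun _ _ : Fin d => (1 : ℝ))
      = (evalRingHom z).mapMatrix
          (Matrix.diagonal (fun i => X + C (lam i)) + C s • Matrix.of fun _ _ => 1) := by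
    ext i j
    by_cases h : i = j <;> simp [h]
  rw [hmat, ← RingHom.map_det,
    Matrix.det_diagonal_add_smul_of_one (fun i => (monic_X_add_C (lam i)).ne_zero),
    derivative_prod_X_add_C, smul_eq_C_mul]
  simp
end

section
/- The Nuij sequence b = (2, 1, 0, …, 0) ∈ ℝ^d has no universal determinantal representation for d ≥ 3: there exist no reals α, β with 2 = (α-β)⁰(α+0·β) [i.e. α = 2], 1 = (1/2)(α-β)(α+β), and 0 = (1/6)(α-β)²(α+2β) simultaneously. -/
/-- The Nuij sequence `b = (2, 1, 0, …, 0)` admits no universal determinantal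
representation for `d ≥ 3`: no reals `α, β` satisfy simultaneously
`α = 2`, `(1/2)(α-β)(α+β) = 1` and `(1/6)(α-β)²(α+2β) = 0`. -/
theorem no_univ_det_rep_two_one :
    ¬ ∃ α β : ℝ, α = 2 ∧ (1 / 2 : ℝ) * (α - β) * (α + β) = 1 ∧
      (1 / 6 : ℝ) * (α - β) ^ 2 * (α + 2 * β) = 0 := by
  rintro ⟨α, β, rfl, h2, h3⟩
  have hb : β ^ 2 = 2 := by nlinarith
  have : (2 - β) ^ 2 * (2 + 2 * β) = 0 := by nlinarith
  rcases mul_eq_zero.1 this with h | h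
  · have : β = 2 := by nlinarith [sq_nonneg (2 - β)]
    nlinarith
  · have : β = -1 := by linarith
    nlinarith
end
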